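/- arXiv:2402.11284 — 3 statements merged into one kernel-verified Lean document; each statement's English description precedes it below -/
import Mathlib

section
/- Let $X$ be a complete separable metric space equipped with a Radon measure $\mu$ finite on bounded sets. A family $\Gamma_0$ of curve fragments (bi-Lipschitz maps $\gamma:K\to X$ from compact sets $K\subset\mathbb{R}$) has $\infty$-modulus zero if and only if there exists a Borel set $N\subset X$ with $\mu(N)=0$ such that every $\gamma\in\Gamma_0$ satisfies $\mathcal{H}^1(N\cap\operatorname{im}(\gamma))>0$. -/
open MeasureTheory Filter Topology Set
open scoped ENNReal NNReal

/-- A curve fragment: a bi-Lipschitz map from a nonempty compact subset of `ℝ` into `X`. -/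
structure CurveFragment (X : Type*) [MetricSpace X] where
  toFun : ℝ → X
  dom : Set ℝ
  compact : IsCompact dom
  nonempty : dom.Nonempty
  biLip : ∃ L : ℝ, 0 < L ∧ ∀ s ∈ dom, ∀ t ∈ dom,
    L⁻¹ * |s - t| ≤ dist (toFun s) (toFun t) ∧ dist (toFun s) (toFun t) ≤ L * |s - t|

namespace CurveFragment

variable {X : Type*} [MetricSpace X]

/-- The image of a curve fragment. -/
def im (γ : CurveFragment X) : Set X := γ.toFun '' γ.dom

/-- The pairs `(a, b)` of endpoints of the gaps of a curve fragment: maximal open intervals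
in the convex hull of the domain that do not meet the domain. -/
def gapPairs (γ : CurveFragment X) : Set (ℝ × ℝ) :=
  {p | p.1 ∈ γ.dom ∧ p.2 ∈ γ.dom ∧ p.1 < p.2 ∧ Set.Ioo p.1 p.2 ∩ γ.dom = ∅}

/-- `gap(γ)`: the sum of `d(γ(aᵢ), γ(bᵢ))` over the gaps `(aᵢ, bᵢ)` of `γ`. -/
noncomputable def gapLength (γ : CurveFragment X) : ℝ≥0∞ :=
  ∑' p : γ.gapPairs, edist (γ.toFun (p : ℝ × ℝ).1) (γ.toFun (p : ℝ × ℝ).2)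

end CurveFragment

/-- The (global) Lipschitz constant `LIP(f)` of `f`, as an element of `ℝ≥0∞`. -/
noncomputable def eLipConst {X : Type*} [MetricSpace X] (f : X → ℝ) : ℝ≥0∞ :=
  ⨅ (K : ℝ≥0) (_ : LipschitzWith K f), (K : ℝ≥0∞)

variable {X : Type*} [MetricSpace X] [MeasurableSpace X] [BorelSpace X]

/-- The `∞`-modulus of a family of curve fragments. -/
noncomputable def ModInfty (μ : Measure X) (Γ : Set (CurveFragment X)) : ℝ≥0∞ :=
  ⨅ (ρ : X → ℝ≥0∞) (_ : Measurable ρ)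
    (_ : ∀ γ ∈ Γ, 1 ≤ ∫⁻ x in γ.im, ρ x ∂(μH[1] : Measure X)), essSup ρ μ

/-- The `∗`-upper gradient inequality
`osc_γ f ≤ ∫_{im γ} g dH¹ + LIP(f) · gap(γ)` along a single curve fragment `γ`. -/
def StarUGIneqOn (f : X → ℝ) (g : X → ℝ≥0∞) (γ : CurveFragment X) : Prop :=
  ∀ s ∈ γ.dom, ∀ t ∈ γ.dom,
    ENNReal.ofReal |f (γ.toFun s) - f (γ.toFun t)| ≤
      (∫⁻ x in γ.im, g x ∂(μH[1] : Measure X)) + eLipConst f * γ.gapLength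

/-- `g` is a `∗`-upper gradient of `f`. -/
def IsStarUG (f : X → ℝ) (g : X → ℝ≥0∞) : Prop :=
  ∀ γ : CurveFragment X, StarUGIneqOn f g γ

/-- `g` is a weak `∗`-upper gradient of `f`: the `∗`-upper gradient inequality holds for all
curve fragments outside a family of `∞`-modulus zero. -/
def IsWeakStarUG (μ : Measure X) (f : X → ℝ) (g : X → ℝ≥0∞) : Prop :=
  ∃ Γ₀ : Set (CurveFragment X), ModInfty μ Γ₀ = 0 ∧
    ∀ γ ∉ Γ₀, StarUGIneqOn f g γ

/-- `D` is a (the) minimal `∗`-upper gradient `|Df|_∗` of `f`: a genuine `∗`-upper gradient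
which is `μ`-a.e. below any weak `∗`-upper gradient lying in `L^∞(μ)`. -/
def IsMinimalStarUG (μ : Measure X) (f : X → ℝ) (D : X → ℝ≥0∞) : Prop :=
  Measurable D ∧ IsStarUG f D ∧
    ∀ g : X → ℝ≥0∞, Measurable g → essSup g μ < ⊤ → IsWeakStarUG μ f g →
      ∀ᵐ x ∂μ, D x ≤ g x

/-!
If `Mod_∞ Γ₀ = 0`, pick admissible `ρₙ` with `‖ρₙ‖_∞ < 1/n` and let `N` be the null set where
some `ρₙ` exceeds `1/n`. A fragment `γ` with `H¹(N ∩ im γ) = 0` would give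
`1 ≤ ∫_{im γ} ρₙ dH¹ ≤ H¹(im γ) / n` for every `n`, impossible since a bi-Lipschitz image of a
compact set has finite `H¹`-measure. Conversely, `∞ · 1_N` is admissible and vanishes `μ`-a.e.
-/

namespace CurveFragment

theorem exists_lipschitzOnWith {Y : Type*} [MetricSpace Y] (γ : CurveFragment Y) :
    ∃ K : ℝ≥0, LipschitzOnWith K γ.toFun γ.dom := by
  obtain ⟨L, hL, hbi⟩ := γ.biLip
  refine ⟨L.toNNReal, LipschitzOnWith.of_dist_le_mul fun s hs t ht => ?_⟩
  rw [Real.coe_toNNReal L hL.le, Real.dist_eq]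
  exact (hbi s hs t ht).2

theorem hausdorffMeasure_im_lt_top (γ : CurveFragment X) : μH[1] γ.im < ⊤ := by
  obtain ⟨K, hK⟩ := γ.exists_lipschitzOnWith
  calc μH[1] γ.im ≤ (K : ℝ≥0∞) ^ (1 : ℝ) * μH[1] γ.dom := hK.hausdorffMeasure_image_le zero_le_one
    _ < ⊤ := by
      rw [hausdorffMeasure_real, ENNReal.rpow_one]
      exact ENNReal.mul_lt_top ENNReal.coe_lt_top γ.compact.measure_lt_top

end CurveFragment

theorem setLIntegral_le_mul_of_measure_inter_eq_zero {α : Type*} [MeasurableSpace α]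
    {ν : Measure α} {s : Set α} {ρ : α → ℝ≥0∞} (hρ : Measurable ρ) {c : ℝ≥0∞}
    (h : ν ({x | c < ρ x} ∩ s) = 0) : ∫⁻ x in s, ρ x ∂ν ≤ c * ν s := by
  have hρc : ∀ᵐ x ∂ν.restrict s, ρ x ≤ c := by
    simp_rw [ae_iff, not_le]
    rwa [Measure.restrict_apply (measurableSet_lt measurable_const hρ)]
  calc ∫⁻ x in s, ρ x ∂ν ≤ ∫⁻ _ in s, c ∂ν := lintegral_mono_ae hρc
    _ = c * ν s := setLIntegral_const s c

section ModInfty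

variable {μ : Measure X} {Γ : Set (CurveFragment X)}

theorem modInfty_le_essSup {ρ : X → ℝ≥0∞} (hρ : Measurable ρ)
    (hadm : ∀ γ ∈ Γ, 1 ≤ ∫⁻ x in γ.im, ρ x ∂(μH[1] : Measure X)) :
    ModInfty μ Γ ≤ essSup ρ μ :=
  iInf₂_le_of_le ρ hρ (iInf_le _ hadm)

theorem exists_essSup_lt_of_modInfty_lt {c : ℝ≥0∞} (h : ModInfty μ Γ < c) :
    ∃ ρ : X → ℝ≥0∞, Measurable ρ ∧
      (∀ γ ∈ Γ, 1 ≤ ∫⁻ x in γ.im, ρ x ∂(μH[1] : Measure X)) ∧ essSup ρ μ < c := by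
  simpa only [ModInfty, iInf_lt_iff, exists_prop] using h

theorem modInfty_eq_zero_of_measure_eq_zero {N : Set X} (hN : MeasurableSet N) (hN0 : μ N = 0)
    (hΓ : ∀ γ ∈ Γ, 0 < (μH[1] : Measure X) (N ∩ γ.im)) : ModInfty μ Γ = 0 := by
  refine nonpos_iff_eq_zero.1 ?_
  calc ModInfty μ Γ ≤ essSup (N.indicator fun _ => ∞) μ := by
        refine modInfty_le_essSup (measurable_const.indicator hN) fun γ hγ => ?_
        rw [lintegral_indicator_const hN, Measure.restrict_apply hN,
          ENNReal.top_mul (hΓ γ hγ).ne']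
        exact le_top
    _ = 0 := ENNReal.essSup_eq_zero_iff.2 (indicator_meas_zero hN0)

theorem exists_measure_eq_zero_of_modInfty_eq_zero (h : ModInfty μ Γ = 0) :
    ∃ N : Set X, MeasurableSet N ∧ μ N = 0 ∧
      ∀ γ ∈ Γ, 0 < (μH[1] : Measure X) (N ∩ γ.im) := by
  have hpos (n : ℕ) : ModInfty μ Γ < (n : ℝ≥0∞)⁻¹ := by
    rw [h, ENNReal.inv_pos]
    exact ENNReal.natCast_ne_top n
  choose ρ hρ hadm hess using fun n => exists_essSup_lt_of_modInfty_lt (hpos n)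
  set A : ℕ → Set X := fun n => {x | (n : ℝ≥0∞)⁻¹ < ρ n x}
  have hA (n : ℕ) : MeasurableSet (A n) := measurableSet_lt measurable_const (hρ n)
  have hA0 (n : ℕ) : μ (A n) = 0 :=
    measure_mono_null (fun x hx => (hess n).trans hx) (meas_essSup_lt (f := ρ n))
  refine ⟨⋃ n, A n, .iUnion hA, measure_iUnion_null hA0, fun γ hγ => ?_⟩
  by_contra! hγ0
  have hbound (n : ℕ) : 1 ≤ (n : ℝ≥0∞)⁻¹ * μH[1] γ.im :=
    (hadm n γ hγ).trans <| setLIntegral_le_mul_of_measure_inter_eq_zero (hρ n) <|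
      measure_mono_null (inter_subset_inter_left _ (subset_iUnion A n)) (nonpos_iff_eq_zero.1 hγ0)
  obtain ⟨n, hn⟩ := ENNReal.exists_nat_gt γ.hausdorffMeasure_im_lt_top.ne
  have hn0 : (n : ℝ≥0∞) ≠ 0 := (zero_le.trans_lt hn).ne'
  have hn_le : (n : ℝ≥0∞) ≤ μH[1] γ.im := by
    simpa only [mul_one] using
      (ENNReal.mul_le_iff_le_inv hn0 (ENNReal.natCast_ne_top n)).2 (hbound n)
  exact hn_le.not_gt hn

end ModInfty

theorem modInfty_eq_zero_iff_general
    (μ : Measure X)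
    (Γ₀ : Set (CurveFragment X)) :
    ModInfty μ Γ₀ = 0 ↔
      ∃ N : Set X, MeasurableSet N ∧ μ N = 0 ∧
        ∀ γ ∈ Γ₀, 0 < (μH[1] : Measure X) (N ∩ γ.im) :=
  ⟨exists_measure_eq_zero_of_modInfty_eq_zero,
    fun ⟨_, hN, hN0, hΓ⟩ => modInfty_eq_zero_of_measure_eq_zero hN hN0 hΓ⟩

/-- On a complete separable metric space with a Borel measure finite on
bounded sets, a family of curve fragments has `∞`-modulus zero iff there is a Borel
`μ`-null set `N` such that every fragment of the family meets `N` in positive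
`H¹`-measure. -/
theorem modInfty_eq_zero_iff
    [CompleteSpace X] [TopologicalSpace.SeparableSpace X]
    (μ : Measure X) (hμ : ∀ s : Set X, Bornology.IsBounded s → μ s < ⊤)
    (Γ₀ : Set (CurveFragment X)) :
    ModInfty μ Γ₀ = 0 ↔
      ∃ N : Set X, MeasurableSet N ∧ μ N = 0 ∧
        ∀ γ ∈ Γ₀, 0 < (μH[1] : Measure X) (N ∩ γ.im) :=
  modInfty_eq_zero_iff_general μ Γ₀
end

section
/- If $\rho:X\to[0,\infty]$ is lower semicontinuous, then its extension $\bar\rho:\operatorname{sh}(X)\to[0,\infty]$ defined by $\bar\rho(\iota_x+t(\iota_y-\iota_x))=t\rho(y)+(1-t)\rho(x)$ is lower semicontinuous on the semihull $\operatorname{sh}(X)$. -/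
/-!
Write `ρ̄(u) = ∑_z u(𝟙_{z}) ρ(z)`. On the segment element `u = (1 - s) ι_p + s ι_q` this is the
supremum of `u(g)` over the nonnegative Lipschitz minorants `g` of `ρ`: lower semicontinuity makes
`ρ(p)` the supremum of the values `g(p)` (tent functions), and the family is closed under `max`, so
the suprema at `p` and at `q` are approached by a single `g`. Each `u ↦ u(g)` is continuous for the
free-space distance, since a `K`-Lipschitz `g` is `K` times a test function plus a constant and
points of the semihull have total mass one; a supremum of continuous functions is lower
semicontinuous.
-/

open Filter Topology Set
open scoped ENNReal NNReal

variable {X : Type*} [MetricSpace X]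

/-- The canonical "evaluation" embedding of `X` into functionals on real functions on `X`;
this realizes the isometric embedding of `X` into its Lipschitz free space (whose elements
are functionals on Lipschitz functions vanishing at a base point). -/
def iotaF (x : X) : (X → ℝ) → ℝ := fun f => f x

/-- The semihull `sh(X)`: the union of the segments `[ι_x, ι_y]`, `x, y ∈ X`, inside the
free space. -/
def semihull (X : Type*) [MetricSpace X] : Set ((X → ℝ) → ℝ) :=
  {v | ∃ x y : X, ∃ t ∈ Set.Icc (0 : ℝ) 1, v = iotaF x + t • (iotaF y - iotaF x)}

/-- The free-space (dual) distance with base point `x₀`: the supremum of `|u(f) - v(f)|`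
over `1`-Lipschitz functions `f` vanishing at `x₀`. -/
noncomputable def freeDist (x₀ : X) (u v : (X → ℝ) → ℝ) : ℝ :=
  ⨆ f : {f : X → ℝ // LipschitzWith 1 f ∧ f x₀ = 0}, |u f.1 - v f.1|

section LipschitzMinorants

variable {α : Type*} [PseudoMetricSpace α]

def lipschitzMinorants (ρ : α → ℝ≥0∞) : Set (α → ℝ) :=
  {g | (∃ K, LipschitzWith K g) ∧ 0 ≤ g ∧ ∀ z, ENNReal.ofReal (g z) ≤ ρ z}

variable {ρ : α → ℝ≥0∞}

lemma sup_mem_lipschitzMinorants {g h : α → ℝ} (hg : g ∈ lipschitzMinorants ρ)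
    (hh : h ∈ lipschitzMinorants ρ) : g ⊔ h ∈ lipschitzMinorants ρ := by
  obtain ⟨⟨Kg, hKg⟩, hg0, hgρ⟩ := hg
  obtain ⟨⟨Kh, hKh⟩, -, hhρ⟩ := hh
  refine ⟨⟨_, hKg.max hKh⟩, le_sup_of_le_left hg0, fun z => ?_⟩
  simpa only [Pi.sup_apply, ENNReal.ofReal_max] using max_le (hgρ z) (hhρ z)

/-- A tent of height `r` at `p`, steep enough to vanish outside a ball on which `ρ > r`. -/
lemma LowerSemicontinuous.exists_mem_lipschitzMinorants_apply_eq (hρ : LowerSemicontinuous ρ)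
    {p : α} {r : ℝ≥0} (hr : (r : ℝ≥0∞) < ρ p) : ∃ g ∈ lipschitzMinorants ρ, g p = r := by
  obtain ⟨δ, hδ, hball⟩ := Metric.eventually_nhds_iff.1 (hρ p r hr)
  set K : ℝ≥0 := Real.toNNReal (r / δ)
  have hKδ : (K : ℝ) * δ = r := by
    rw [Real.coe_toNNReal _ (by positivity), div_mul_cancel₀ _ hδ.ne']
  have hlip : LipschitzWith K fun z => (r : ℝ) - K * dist z p :=
    LipschitzWith.of_dist_le_mul fun z w => by
      rw [Real.dist_eq, sub_sub_sub_cancel_left, ← mul_sub, abs_mul, NNReal.abs_eq]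
      exact mul_le_mul_of_nonneg_left (abs_dist_sub_le w z p |>.trans_eq (dist_comm w z))
        K.coe_nonneg
  refine ⟨fun z => max 0 ((r : ℝ) - K * dist z p),
    ⟨⟨K, hlip.const_max 0⟩, fun z => le_max_left _ _, fun z => ?_⟩, by simp⟩
  rcases lt_or_ge (dist z p) δ with hz | hz
  · refine (ENNReal.ofReal_le_ofReal (max_le r.coe_nonneg ?_)).trans ?_
    · nlinarith [K.coe_nonneg, dist_nonneg (x := z) (y := p)]
    · simpa using (hball hz).le
  · have : (r : ℝ) - K * dist z p ≤ 0 := by nlinarith [K.coe_nonneg]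
    simp [max_eq_left this]

lemma LowerSemicontinuous.iSup_lipschitzMinorants (hρ : LowerSemicontinuous ρ) (p : α) :
    ⨆ g : lipschitzMinorants ρ, ENNReal.ofReal (g.1 p) = ρ p := by
  refine le_antisymm (iSup_le fun g => g.2.2.2 p) (ENNReal.le_of_forall_nnreal_lt fun r hr => ?_)
  obtain ⟨g, hg, hgp⟩ := hρ.exists_mem_lipschitzMinorants_apply_eq hr
  exact le_iSup_of_le ⟨g, hg⟩ (by simp [hgp])

end LipschitzMinorants

lemma iotaF_segment_apply {α : Type*} (x y : α) (t : ℝ) (f : α → ℝ) :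
    (iotaF x + t • (iotaF y - iotaF x)) f = (1 - t) * f x + t * f y := by
  simp only [Pi.add_apply, Pi.smul_apply, Pi.sub_apply, smul_eq_mul, iotaF]
  ring

section Semihull

variable {u v : (X → ℝ) → ℝ}

lemma apply_affine_of_mem_semihull (hu : u ∈ semihull X) (a c : ℝ) (f : X → ℝ) :
    u (fun z => a * f z + c) = a * u f + c := by
  obtain ⟨p, q, s, -, rfl⟩ := hu
  simp only [iotaF_segment_apply]
  ring

lemma exists_abs_apply_le_of_mem_semihull (x₀ : X) (hu : u ∈ semihull X) :
    ∃ C, ∀ f : X → ℝ, LipschitzWith 1 f → f x₀ = 0 → |u f| ≤ C := by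
  obtain ⟨p, q, s, ⟨hs0, hs1⟩, rfl⟩ := hu
  refine ⟨dist p x₀ + dist q x₀, fun f hf hf0 => ?_⟩
  have hbound : ∀ z, |f z| ≤ dist z x₀ := fun z => by
    simpa [Real.dist_eq, hf0] using hf.dist_le_mul z x₀
  rw [iotaF_segment_apply]
  calc |(1 - s) * f p + s * f q| ≤ (1 - s) * |f p| + s * |f q| := by
        refine (abs_add_le _ _).trans_eq ?_
        rw [abs_mul, abs_mul, abs_of_nonneg (sub_nonneg.2 hs1), abs_of_nonneg hs0]
    _ ≤ |f p| + |f q| := by nlinarith [abs_nonneg (f p), abs_nonneg (f q)]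
    _ ≤ dist p x₀ + dist q x₀ := add_le_add (hbound p) (hbound q)

lemma abs_apply_sub_le_freeDist (x₀ : X) (hu : u ∈ semihull X) (hv : v ∈ semihull X)
    {f : X → ℝ} (hf : LipschitzWith 1 f) (hf0 : f x₀ = 0) : |u f - v f| ≤ freeDist x₀ u v := by
  obtain ⟨Cu, hCu⟩ := exists_abs_apply_le_of_mem_semihull x₀ hu
  obtain ⟨Cv, hCv⟩ := exists_abs_apply_le_of_mem_semihull x₀ hv
  refine le_ciSup (f := fun f : {f : X → ℝ // LipschitzWith 1 f ∧ f x₀ = 0} => |u f.1 - v f.1|)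
    ⟨Cu + Cv, ?_⟩ ⟨f, hf, hf0⟩
  rintro _ ⟨⟨f, hf, hf0⟩, rfl⟩
  exact (abs_sub _ _).trans (add_le_add (hCu f hf hf0) (hCv f hf hf0))

/-- Rescaling `g` to `K⁻¹ (g - g x₀)` reduces to the test functions in the definition of
`freeDist`. -/
lemma abs_apply_sub_le_mul_freeDist (x₀ : X) (hu : u ∈ semihull X) (hv : v ∈ semihull X)
    {K : ℝ≥0} (hK : 0 < K) {g : X → ℝ} (hg : LipschitzWith K g) :
    |u g - v g| ≤ K * freeDist x₀ u v := by
  have hK' : (0 : ℝ) < K := hK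
  set f : X → ℝ := fun z => (K : ℝ)⁻¹ * g z + -((K : ℝ)⁻¹ * g x₀)
  have hf : LipschitzWith 1 f := LipschitzWith.of_dist_le_mul fun z w => by
    have := hg.dist_le_mul z w
    rw [Real.dist_eq] at this ⊢
    rw [add_sub_add_right_eq_sub, ← mul_sub, abs_mul, abs_inv, abs_of_pos hK', NNReal.coe_one,
      one_mul, inv_mul_le_iff₀ hK']
    exact this
  have hf0 : f x₀ = 0 := by simp [f]
  have hfg : u f - v f = (K : ℝ)⁻¹ * (u g - v g) := by
    simp only [f, apply_affine_of_mem_semihull hu, apply_affine_of_mem_semihull hv]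
    ring
  have := abs_apply_sub_le_freeDist x₀ hu hv hf hf0
  rw [hfg, abs_mul, abs_inv, abs_of_pos hK', inv_mul_le_iff₀ hK'] at this
  exact this

lemma tendsto_apply_of_tendsto_freeDist (x₀ : X) {ι : Type*} {l : Filter ι}
    {vs : ι → (X → ℝ) → ℝ} (hv : v ∈ semihull X) (hvs : ∀ j, vs j ∈ semihull X)
    (hlim : Tendsto (fun j => freeDist x₀ (vs j) v) l (𝓝 0)) {K : ℝ≥0} {g : X → ℝ}
    (hg : LipschitzWith K g) : Tendsto (fun j => vs j g) l (𝓝 (v g)) := by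
  have hbound : ∀ j, dist (vs j g) (v g) ≤ (K + 1 : ℝ≥0) * freeDist x₀ (vs j) v := fun j =>
    abs_apply_sub_le_mul_freeDist x₀ (hvs j) hv (add_pos_of_nonneg_of_pos K.2 one_pos)
      (hg.weaken (le_add_of_nonneg_right zero_le_one))
  refine tendsto_iff_dist_tendsto_zero.2 (squeeze_zero (fun _ => dist_nonneg) hbound ?_)
  simpa using hlim.const_mul ((K + 1 : ℝ≥0) : ℝ)

end Semihull

/-- `v (𝟙_{z})` is the mass that `v` puts at `z`; defining `ρ̄` on all functionals this way avoids
choosing a representation of `v` as a point of a segment. -/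
noncomputable def massExtension {α : Type*} (ρ : α → ℝ≥0∞) (v : (α → ℝ) → ℝ) : ℝ≥0∞ :=
  ∑' z, ENNReal.ofReal (v (({z} : Set α).indicator 1)) * ρ z

lemma tsum_ofReal_indicator_singleton_mul {α : Type*} (ρ : α → ℝ≥0∞) (x : α) :
    ∑' z, ENNReal.ofReal (({z} : Set α).indicator 1 x) * ρ z = ρ x := by
  rw [tsum_eq_single x fun z hz => by simp [Set.mem_singleton_iff, hz.symm]]
  simp

lemma ofReal_one_sub_mul_add_mul {a b t : ℝ} (ht : t ∈ Icc (0 : ℝ) 1) (ha : 0 ≤ a) (hb : 0 ≤ b) :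
    ENNReal.ofReal ((1 - t) * a + t * b) =
      ENNReal.ofReal (1 - t) * ENNReal.ofReal a + ENNReal.ofReal t * ENNReal.ofReal b := by
  rw [ENNReal.ofReal_add (mul_nonneg (sub_nonneg.2 ht.2) ha) (mul_nonneg ht.1 hb),
    ENNReal.ofReal_mul (sub_nonneg.2 ht.2), ENNReal.ofReal_mul ht.1]

lemma massExtension_segment {α : Type*} (ρ : α → ℝ≥0∞) (x y : α) {t : ℝ}
    (ht : t ∈ Icc (0 : ℝ) 1) :
    massExtension ρ (iotaF x + t • (iotaF y - iotaF x)) =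
      ENNReal.ofReal t * ρ y + ENNReal.ofReal (1 - t) * ρ x := by
  have hsplit : ∀ z, ENNReal.ofReal ((1 - t) * ({z} : Set α).indicator 1 x +
      t * ({z} : Set α).indicator 1 y) * ρ z =
      ENNReal.ofReal (1 - t) * (ENNReal.ofReal (({z} : Set α).indicator 1 x) * ρ z) +
        ENNReal.ofReal t * (ENNReal.ofReal (({z} : Set α).indicator 1 y) * ρ z) := fun z => by
    have hind : ∀ w, (0 : ℝ) ≤ ({z} : Set α).indicator 1 w :=
      Set.indicator_nonneg fun _ _ => zero_le_one
    rw [ofReal_one_sub_mul_add_mul ht (hind x) (hind y), add_mul, mul_assoc, mul_assoc]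
  simp only [massExtension, iotaF_segment_apply, hsplit]
  rw [ENNReal.tsum_add, ENNReal.tsum_mul_left, ENNReal.tsum_mul_left,
    tsum_ofReal_indicator_singleton_mul, tsum_ofReal_indicator_singleton_mul, add_comm]

lemma massExtension_eq_iSup {ρ : X → ℝ≥0∞} (hρ : LowerSemicontinuous ρ)
    {u : (X → ℝ) → ℝ} (hu : u ∈ semihull X) :
    massExtension ρ u = ⨆ g : lipschitzMinorants ρ, ENNReal.ofReal (u g) := by
  obtain ⟨p, q, s, hs, rfl⟩ := hu
  rw [massExtension_segment ρ p q hs, ← hρ.iSup_lipschitzMinorants p,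
    ← hρ.iSup_lipschitzMinorants q, ENNReal.mul_iSup, ENNReal.mul_iSup, add_comm,
    ENNReal.iSup_add_iSup]
  · refine iSup_congr fun g => ?_
    rw [iotaF_segment_apply, ofReal_one_sub_mul_add_mul hs (g.2.2.1 p) (g.2.2.1 q)]
  · exact fun g h => ⟨⟨g ⊔ h, sup_mem_lipschitzMinorants g.2 h.2⟩, by
      gcongr
      exacts [le_sup_left (a := g.1) p, le_sup_right (b := h.1) q]⟩

/-- The "convex" extension `ρ̄(ι_x + t(ι_y - ι_x)) = t ρ(y) + (1 - t) ρ(x)`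
of a lower semicontinuous function `ρ : X → [0, ∞]` is well defined and (sequentially) lower
semicontinuous on the semihull with respect to the free-space distance. -/
theorem extension_lowerSemicontinuous (x₀ : X)
    (ρ : X → ℝ≥0∞) (hρ : LowerSemicontinuous ρ) :
    ∃ ρb : ((X → ℝ) → ℝ) → ℝ≥0∞,
      (∀ x y : X, ∀ t ∈ Set.Icc (0 : ℝ) 1,
        ρb (iotaF x + t • (iotaF y - iotaF x)) =
          ENNReal.ofReal t * ρ y + ENNReal.ofReal (1 - t) * ρ x) ∧
      (∀ v ∈ semihull X, ∀ vj : ℕ → (X → ℝ) → ℝ, (∀ j, vj j ∈ semihull X) →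
        Tendsto (fun j => freeDist x₀ (vj j) v) atTop (𝓝 0) →
        ρb v ≤ liminf (fun j => ρb (vj j)) atTop) := by
  refine ⟨massExtension ρ, fun x y t ht => massExtension_segment ρ x y ht, ?_⟩
  intro v hv vj hvj hlim
  rw [massExtension_eq_iSup hρ hv]
  refine iSup_le fun g => ?_
  obtain ⟨⟨K, hK⟩, -⟩ := g.2
  have hg : Tendsto (fun j => vj j g) atTop (𝓝 (v g)) :=
    tendsto_apply_of_tendsto_freeDist x₀ hv hvj hlim hK
  calc ENNReal.ofReal (v g)
      = liminf (fun j => ENNReal.ofReal (vj j g)) atTop :=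
        (ENNReal.tendsto_ofReal hg).liminf_eq.symm
    _ ≤ liminf (fun j => massExtension ρ (vj j)) atTop :=
        liminf_le_liminf (Eventually.of_forall fun j =>
          (le_iSup_of_le g le_rfl).trans_eq (massExtension_eq_iSup hρ (hvj j)).symm)
end

section
/- Let $\gamma$ be a curve fragment in a metric space $X$, and $(f_j)$ a sequence of Lipschitz functions converging pointwise to a Lipschitz $f$ with $\sup_j\operatorname{LIP}(f_j)<\infty$. Then for every $h\in L^1(\operatorname{dom}(\gamma))$, $\lim_{j\to\infty}\int_{\operatorname{dom}(\gamma)}h(t)(f_j\circ\gamma)'(t)\,dt=\int_{\operatorname{dom}(\gamma)}h(t)(f\circ\gamma)'(t)\,dt$. -/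
open MeasureTheory Filter Topology Set
open scoped ENNReal NNReal

namespace CurveFragment

variable {X : Type*} [MetricSpace X]

/-- `f ∘ γ` has derivative `v` at `t` (limit taken along the domain). -/
def HasDerivAlong (γ : CurveFragment X) (f : X → ℝ) (t v : ℝ) : Prop :=
  Tendsto (fun s => (f (γ.toFun s) - f (γ.toFun t)) / (s - t)) (𝓝[γ.dom \ {t}] t) (𝓝 v)

end CurveFragment

/-!
Composing with `γ` reduces everything to the functions `f_j ∘ γ`, which are uniformly Lipschitz on
the compact set `D = dom γ` and converge pointwise to `f ∘ γ`. By Arzelà–Ascoli they converge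
uniformly on `D`, so their McShane extensions `g_j` to `ℝ` are uniformly Lipschitz and converge
pointwise everywhere to the extension `g` of `f ∘ γ`. Almost every point of `D` is an accumulation
point of `D` (Cantor–Bendixson) at which every `g_j` is differentiable (Rademacher), so there the
derivative along `D` is `g_j'`. It remains to see that `g_j' → g'` weakly* in `L^∞(ℝ)`: against a
smooth compactly supported `φ` integrate by parts, `∫ φ g_j' = -∫ φ' g_j`, and use dominated
convergence; a general `h ∈ L¹` is approximated by such `φ`, the error being controlled uniformly
in `j` by `‖g_j'‖_∞ ≤ C`.
-/

open scoped ContDiff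

lemma LipschitzOnWith.of_tendsto {ι α β : Type*} [PseudoEMetricSpace α] [PseudoEMetricSpace β]
    {l : Filter ι} [l.NeBot] {F : ι → α → β} {f : α → β} {s : Set α} {K : ℝ≥0}
    (hF : ∀ i, LipschitzOnWith K (F i) s) (hlim : ∀ x ∈ s, Tendsto (fun i => F i x) l (𝓝 (f x))) :
    LipschitzOnWith K f s := fun x hx y hy =>
  le_of_tendsto' ((hlim x hx).edist (hlim y hy)) fun i => hF i hx hy

lemma tendstoUniformlyOn_of_lipschitzOnWith {ι α β : Type*} [PseudoMetricSpace α]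
    [PseudoMetricSpace β] {l : Filter ι} {F : ι → α → β} {f : α → β} {s : Set α} {K : ℝ≥0}
    (hs : IsCompact s) (hF : ∀ i, LipschitzOnWith K (F i) s)
    (hlim : ∀ x ∈ s, Tendsto (fun i => F i x) l (𝓝 (f x))) :
    TendstoUniformlyOn F f l s := by
  have hequi : EquicontinuousOn F s :=
    (LipschitzOnWith.uniformEquicontinuousOn F K hF).equicontinuousOn
  have := (EquicontinuousOn.tendsto_uniformOnFun_iff_pi' (𝔖 := {s}) (by simpa using hs)
    (by simpa using hequi) l f).2 ?_
  · exact UniformOnFun.tendsto_iff_tendstoUniformlyOn.1 this s rfl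
  · simpa [tendsto_pi_nhds] using hlim

section McShane

variable {α : Type*} [PseudoMetricSpace α]

noncomputable def mcShaneExtension (F : α → ℝ) (s : Set α) (K : ℝ≥0) (x : α) : ℝ :=
  ⨅ y : s, F y + K * dist x y

namespace LipschitzOnWith

variable {F G : α → ℝ} {s : Set α} {K : ℝ≥0}

lemma bddBelow_range_mcShane (hF : LipschitzOnWith K F s) (hs : s.Nonempty) (x : α) :
    BddBelow (range fun y : s => F y + K * dist x y) := by
  obtain ⟨z, hz⟩ := hs
  refine ⟨F z - K * dist x z, ?_⟩
  rintro _ ⟨y, rfl⟩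
  have := hF.le_add_mul hz y.2
  have := dist_triangle_left z y x
  dsimp only
  nlinarith [K.coe_nonneg]

lemma mcShaneExtension_eqOn (hF : LipschitzOnWith K F s) :
    EqOn (mcShaneExtension F s K) F s := by
  intro x hx
  have : Nonempty s := ⟨⟨x, hx⟩⟩
  unfold mcShaneExtension
  exact le_antisymm (by simpa using ciInf_le (hF.bddBelow_range_mcShane ⟨x, hx⟩ x) ⟨x, hx⟩)
    (le_ciInf fun y => hF.le_add_mul hx y.2)

lemma lipschitzWith_mcShaneExtension (hF : LipschitzOnWith K F s) (hs : s.Nonempty) :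
    LipschitzWith K (mcShaneExtension F s K) := by
  have := hs.to_subtype
  refine LipschitzWith.of_le_add_mul K fun x x' => ?_
  rw [← sub_le_iff_le_add]
  refine le_ciInf fun y => ?_
  have := ciInf_le (hF.bddBelow_range_mcShane hs x) y
  have := dist_triangle x x' y
  unfold mcShaneExtension
  nlinarith [K.coe_nonneg]

lemma mcShaneExtension_le_add (hF : LipschitzOnWith K F s) (hs : s.Nonempty) {δ : ℝ}
    (hδ : ∀ y ∈ s, F y ≤ G y + δ) (x : α) :
    mcShaneExtension F s K x ≤ mcShaneExtension G s K x + δ := by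
  have := hs.to_subtype
  rw [← sub_le_iff_le_add]
  refine le_ciInf fun y => ?_
  have := ciInf_le (hF.bddBelow_range_mcShane hs x) y
  have := hδ y y.2
  unfold mcShaneExtension
  linarith

end LipschitzOnWith

lemma tendsto_mcShaneExtension {ι : Type*} {l : Filter ι} {F : ι → α → ℝ} {G : α → ℝ}
    {s : Set α} {K : ℝ≥0} (hs : s.Nonempty) (hF : ∀ i, LipschitzOnWith K (F i) s)
    (hG : LipschitzOnWith K G s) (hFG : TendstoUniformlyOn F G l s) (x : α) :
    Tendsto (fun i => mcShaneExtension (F i) s K x) l (𝓝 (mcShaneExtension G s K x)) := by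
  rw [Metric.tendsto_nhds]
  intro ε hε
  filter_upwards [Metric.tendstoUniformlyOn_iff.1 hFG (ε / 2) (half_pos hε)] with i hi
  have hclose : ∀ y ∈ s, |F i y - G y| ≤ ε / 2 := fun y hy => by
    rw [← Real.dist_eq, dist_comm]; exact (hi y hy).le
  have h₁ := (hF i).mcShaneExtension_le_add (G := G) (δ := ε / 2) hs
    (fun y hy => by linarith [abs_le.1 (hclose y hy)]) x
  have h₂ := hG.mcShaneExtension_le_add (G := F i) (δ := ε / 2) hs
    (fun y hy => by linarith [abs_le.1 (hclose y hy)]) x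
  rw [Real.dist_eq, abs_lt]
  constructor <;> linarith

end McShane

lemma ae_accPt_of_isClosed {α : Type*} [TopologicalSpace α] [SecondCountableTopology α]
    [MeasurableSpace α] [OpensMeasurableSpace α] {μ : Measure α} [NullSingletonClass μ]
    {s : Set α} (hs : IsClosed s) : ∀ᵐ x ∂μ.restrict s, AccPt x (𝓟 s) := by
  obtain ⟨V, P, hV, hP, rfl⟩ := exists_countable_union_perfect_of_isClosed hs
  filter_upwards [ae_restrict_mem hs.measurableSet,
    ae_restrict_of_ae (measure_eq_zero_iff_ae_notMem.1 (hV.measure_zero μ))] with x hx hxV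
  exact (hP.acc x (hx.resolve_left hxV)).mono (principal_mono.2 subset_union_right)

lemma LipschitzWith.ae_eq_deriv_of_hasDerivWithinAt {C : ℝ≥0} {g F d : ℝ → ℝ} {D : Set ℝ}
    (hD : IsClosed D) (hg : LipschitzWith C g) (hgF : EqOn g F D)
    (hd : ∀ᵐ t ∂volume.restrict D, HasDerivWithinAt F (d t) D t) :
    d =ᵐ[volume.restrict D] deriv g := by
  filter_upwards [hd, ae_restrict_of_ae hg.ae_differentiableAt, ae_accPt_of_isClosed hD,
    ae_restrict_mem hD.measurableSet] with t hdt hdiff hacc ht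
  exact hacc.uniqueDiffWithinAt.eq_deriv _ (hdt.congr_of_mem (fun x hx => hgF hx) ht)
    hdiff.hasDerivAt.hasDerivWithinAt

lemma LipschitzWith.integral_mul_deriv_eq_neg {C : ℝ≥0} {g φ : ℝ → ℝ} (hg : LipschitzWith C g)
    (hφ : ContDiff ℝ 1 φ) (hφs : HasCompactSupport φ) :
    ∫ x, φ x * deriv g x = -∫ x, deriv φ x * g x := by
  obtain ⟨R, hR, hsupp⟩ := hφs.isBounded.subset_ball_lt 0 0
  have hφ_out : ∀ x ∉ Ioo (-R) R, φ x = 0 := fun x hx =>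
    image_eq_zero_of_notMem_tsupport fun h => hx (by simpa [abs_lt] using hsupp h)
  have hφ'_out : ∀ x ∉ Ioo (-R) R, deriv φ x = 0 := fun x hx =>
    image_eq_zero_of_notMem_tsupport fun h => hx <| by
      simpa [abs_lt] using hsupp (tsupport_deriv_subset h)
  have hIcc : ∀ u : ℝ → ℝ, (∀ x ∉ Ioo (-R) R, u x = 0) → ∫ x, u x = ∫ x in -R..R, u x :=
    fun u hu => by
      rw [intervalIntegral.integral_of_le (by linarith),
        setIntegral_eq_integral_of_forall_compl_eq_zero]
      exact fun x hx => hu x fun h => hx (Ioo_subset_Ioc_self h)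
  rw [hIcc _ fun x hx => by simp [hφ_out x hx], hIcc _ fun x hx => by simp [hφ'_out x hx],
    (hφ.contDiffOn.absolutelyContinuousOnInterval).integral_mul_deriv_eq_deriv_mul
      (hg.lipschitzOnWith.absolutelyContinuousOnInterval),
    hφ_out R (by simp), hφ_out (-R) (by simp)]
  ring

lemma tendsto_integral_mul_deriv_of_contDiff {C : ℝ≥0} {g : ℕ → ℝ → ℝ} {G : ℝ → ℝ}
    (hg : ∀ j, LipschitzWith C (g j)) (hG : LipschitzWith C G)
    (hlim : ∀ x, Tendsto (fun j => g j x) atTop (𝓝 (G x)))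
    {φ : ℝ → ℝ} (hφ : ContDiff ℝ 1 φ) (hφs : HasCompactSupport φ) :
    Tendsto (fun j => ∫ x, φ x * deriv (g j) x) atTop (𝓝 (∫ x, φ x * deriv G x)) := by
  simp_rw [(hg _).integral_mul_deriv_eq_neg hφ hφs, hG.integral_mul_deriv_eq_neg hφ hφs]
  refine Tendsto.neg ?_
  obtain ⟨B, hB⟩ := (hlim 0).norm.bddAbove_range
  have hφ' : Continuous (deriv φ) := hφ.continuous_deriv le_rfl
  refine tendsto_integral_of_dominated_convergence (fun x => ‖deriv φ x‖ * (B + C * ‖x‖))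
    (fun j => (hφ'.mul (hg j).continuous).aestronglyMeasurable) ?_ (fun j => ?_)
    (Eventually.of_forall fun x => (hlim x).const_mul _)
  · exact (hφ'.norm.mul (by fun_prop)).integrable_of_hasCompactSupport hφs.deriv.norm.mul_right
  · refine Eventually.of_forall fun x => ?_
    have h0 : ‖g j 0‖ ≤ B := hB ⟨j, rfl⟩
    have hx : ‖g j x - g j 0‖ ≤ C * ‖x‖ := by
      simpa [dist_eq_norm] using (hg j).dist_le_mul x 0
    rw [norm_mul]
    gcongr
    linarith [norm_sub_norm_le (g j x) (g j 0)]

section Pairing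

variable {E : Type*} [MeasurableSpace E] {μ : Measure E} {C : ℝ}

lemma abs_integral_mul_sub_integral_mul_le {u v b : E → ℝ} (hu : Integrable u μ)
    (hv : Integrable v μ) (hb : AEStronglyMeasurable b μ) (hbC : ∀ x, ‖b x‖ ≤ C) :
    |∫ x, u x * b x ∂μ - ∫ x, v x * b x ∂μ| ≤ C * ∫ x, ‖u x - v x‖ ∂μ := by
  have hbC' : ∀ᵐ x ∂μ, ‖b x‖ ≤ C := Eventually.of_forall hbC
  rw [← integral_sub (hu.mul_bdd hb hbC') (hv.mul_bdd hb hbC'), ← integral_const_mul,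
    ← Real.norm_eq_abs]
  refine norm_integral_le_of_norm_le ((hu.sub hv).norm.const_mul C)
    (Eventually.of_forall fun x => ?_)
  rw [← sub_mul, norm_mul, mul_comm]
  exact mul_le_mul_of_nonneg_right (hbC x) (norm_nonneg _)

variable [NormedAddCommGroup E] [NormedSpace ℝ E] [FiniteDimensional ℝ E] [BorelSpace E]
  [IsFiniteMeasureOnCompacts μ]

lemma MeasureTheory.Integrable.exists_contDiff_integral_norm_sub_le {h : E → ℝ}
    (hh : Integrable h μ) {ε : ℝ} (hε : 0 < ε) : ∃ φ : E → ℝ, HasCompactSupport φ ∧ ContDiff ℝ ∞ φ ∧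
      Integrable φ μ ∧ ∫ x, ‖h x - φ x‖ ∂μ ≤ ε := by
  obtain ⟨φ, hφs, hφ, hφε⟩ :=
    (memLp_one_iff_integrable.2 hh).exist_eLpNorm_sub_le (by simp) le_rfl hε
  have hφi : Integrable φ μ := hφ.continuous.integrable_of_hasCompactSupport hφs
  refine ⟨φ, hφs, hφ, hφi, ?_⟩
  change ∫ x, ‖(h - φ) x‖ ∂μ ≤ ε
  rw [integral_norm_eq_lintegral_enorm (hh.sub hφi).aestronglyMeasurable]
  rw [eLpNorm_one_eq_lintegral_enorm] at hφε
  exact ENNReal.toReal_le_of_le_ofReal hε.le hφε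

lemma tendsto_integral_mul_of_forall_contDiff {ι : Type*} {l : Filter ι} {b : ι → E → ℝ}
    {b₀ : E → ℝ} (hb : ∀ i, AEStronglyMeasurable (b i) μ) (hb₀ : AEStronglyMeasurable b₀ μ)
    (hbC : ∀ i x, ‖b i x‖ ≤ C) (hb₀C : ∀ x, ‖b₀ x‖ ≤ C)
    (htest : ∀ φ : E → ℝ, ContDiff ℝ ∞ φ → HasCompactSupport φ →
      Tendsto (fun i => ∫ x, φ x * b i x ∂μ) l (𝓝 (∫ x, φ x * b₀ x ∂μ)))
    {h : E → ℝ} (hh : Integrable h μ) :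
    Tendsto (fun i => ∫ x, h x * b i x ∂μ) l (𝓝 (∫ x, h x * b₀ x ∂μ)) := by
  have hC : 0 ≤ C := (norm_nonneg _).trans (hb₀C 0)
  rw [Metric.tendsto_nhds]
  intro ε hε
  obtain ⟨φ, hφs, hφ, hφi, hφε⟩ :=
    hh.exists_contDiff_integral_norm_sub_le (μ := μ) (ε := ε / (3 * (C + 1))) (by positivity)
  have hCφ : C * ∫ x, ‖h x - φ x‖ ∂μ < ε / 3 := by
    calc C * ∫ x, ‖h x - φ x‖ ∂μ ≤ C * (ε / (3 * (C + 1))) := by gcongr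
      _ < ε / 3 := by field_simp; nlinarith
  filter_upwards [Metric.tendsto_nhds.1 (htest φ hφ hφs) (ε / 3) (by positivity)] with i hi
  have h₁ := abs_integral_mul_sub_integral_mul_le hh hφi (hb i) (hbC i)
  have h₂ := abs_integral_mul_sub_integral_mul_le hh hφi hb₀ hb₀C
  rw [Real.dist_eq] at hi ⊢
  obtain ⟨h₁l, h₁r⟩ := abs_le.1 h₁
  obtain ⟨h₂l, h₂r⟩ := abs_le.1 h₂
  obtain ⟨hil, hir⟩ := abs_lt.1 hi
  rw [abs_lt]
  constructor <;> linarith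

end Pairing

lemma tendsto_integral_mul_deriv {C : ℝ≥0} {g : ℕ → ℝ → ℝ} {G : ℝ → ℝ}
    (hg : ∀ j, LipschitzWith C (g j)) (hG : LipschitzWith C G)
    (hlim : ∀ x, Tendsto (fun j => g j x) atTop (𝓝 (G x))) {h : ℝ → ℝ} (hh : Integrable h) :
    Tendsto (fun j => ∫ x, h x * deriv (g j) x) atTop (𝓝 (∫ x, h x * deriv G x)) :=
  tendsto_integral_mul_of_forall_contDiff (fun _ => (measurable_deriv _).aestronglyMeasurable)
    (measurable_deriv _).aestronglyMeasurable (fun j _ => norm_deriv_le_of_lipschitz (hg j))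
    (fun _ => norm_deriv_le_of_lipschitz hG)
    (fun _ hφ hφs => tendsto_integral_mul_deriv_of_contDiff hg hG hlim (hφ.of_le (by simp)) hφs)
    hh

theorem tendsto_setIntegral_mul_of_hasDerivWithinAt {D : Set ℝ} (hD : IsCompact D) {K : ℝ≥0}
    {F : ℕ → ℝ → ℝ} {F₀ : ℝ → ℝ} (hF : ∀ j, LipschitzOnWith K (F j) D)
    (hlim : ∀ t ∈ D, Tendsto (fun j => F j t) atTop (𝓝 (F₀ t)))
    {d : ℕ → ℝ → ℝ} (hd : ∀ j, ∀ᵐ t ∂volume.restrict D, HasDerivWithinAt (F j) (d j t) D t)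
    {d₀ : ℝ → ℝ} (hd₀ : ∀ᵐ t ∂volume.restrict D, HasDerivWithinAt F₀ (d₀ t) D t)
    {h : ℝ → ℝ} (hh : IntegrableOn h D) :
    Tendsto (fun j => ∫ t in D, h t * d j t) atTop (𝓝 (∫ t in D, h t * d₀ t)) := by
  rcases D.eq_empty_or_nonempty with rfl | hne
  · simp
  have hF₀ : LipschitzOnWith K F₀ D := .of_tendsto hF hlim
  have hext : ∀ {F' : ℝ → ℝ} {d' : ℝ → ℝ}, LipschitzOnWith K F' D →
      (∀ᵐ t ∂volume.restrict D, HasDerivWithinAt F' (d' t) D t) →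
      ∫ t in D, h t * d' t = ∫ t, D.indicator h t * deriv (mcShaneExtension F' D K) t := by
    intro F' d' hF' hd'
    have hae := (hF'.lipschitzWith_mcShaneExtension hne).ae_eq_deriv_of_hasDerivWithinAt
      hD.isClosed hF'.mcShaneExtension_eqOn hd'
    rw [integral_congr_ae (hae.mono fun t ht => by rw [ht]),
      ← integral_indicator hD.measurableSet]
    simp_rw [indicator_mul_left]
  simp_rw [hext (hF _) (hd _), hext hF₀ hd₀]
  exact tendsto_integral_mul_deriv (fun j => (hF j).lipschitzWith_mcShaneExtension hne)
    (hF₀.lipschitzWith_mcShaneExtension hne)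
    (tendsto_mcShaneExtension hne hF hF₀ (tendstoUniformlyOn_of_lipschitzOnWith hD hF hlim))
    (hh.integrable_indicator hD.measurableSet)

namespace CurveFragment

variable {X : Type*} [MetricSpace X] (γ : CurveFragment X)

lemma exists_lipschitzOnWith_s14 : ∃ L : ℝ≥0, LipschitzOnWith L γ.toFun γ.dom := by
  obtain ⟨L, hL₀, hL⟩ := γ.biLip
  refine ⟨⟨L, hL₀.le⟩, .of_dist_le_mul fun s hs t ht => ?_⟩
  rw [Real.dist_eq]
  exact (hL s hs t ht).2

lemma hasDerivAlong_iff {f : X → ℝ} {t v : ℝ} :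
    γ.HasDerivAlong f t v ↔ HasDerivWithinAt (f ∘ γ.toFun) v γ.dom t := by
  simp only [HasDerivAlong, hasDerivWithinAt_iff_tendsto_slope, slope_fun_def_field,
    Function.comp_apply]

end CurveFragment

theorem deriv_along_weakStar_convergence_general {X : Type*} [MetricSpace X]
    (γ : CurveFragment X)
    (f : X → ℝ)
    (fj : ℕ → X → ℝ) (K : ℝ≥0) (hfj : ∀ j, LipschitzWith K (fj j))
    (hpt : ∀ x, Tendsto (fun j => fj j x) atTop (𝓝 (f x)))
    (d : ℕ → ℝ → ℝ)
    (hd : ∀ j, ∀ᵐ t ∂(volume.restrict γ.dom), γ.HasDerivAlong (fj j) t (d j t))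
    (df : ℝ → ℝ)
    (hdf : ∀ᵐ t ∂(volume.restrict γ.dom), γ.HasDerivAlong f t (df t))
    (h : ℝ → ℝ) (hh : Integrable h (volume.restrict γ.dom)) :
    Tendsto (fun j => ∫ t in γ.dom, h t * d j t) atTop
      (𝓝 (∫ t in γ.dom, h t * df t)) := by
  obtain ⟨L, hγ⟩ := γ.exists_lipschitzOnWith_s14
  refine tendsto_setIntegral_mul_of_hasDerivWithinAt (F₀ := f ∘ γ.toFun) γ.compact
    (fun j => (hfj j).comp_lipschitzOnWith hγ) (fun t _ => hpt (γ.toFun t))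
    (fun j => ?_) ?_ hh
  · simpa only [γ.hasDerivAlong_iff] using hd j
  · simpa only [γ.hasDerivAlong_iff] using hdf

/-- Weak* continuity of derivatives along a curve fragment: if uniformly
Lipschitz functions `f_j` converge pointwise to a Lipschitz `f`, then for every
`h ∈ L¹(dom γ)` the integrals `∫ h (f_j ∘ γ)' dt` converge to `∫ h (f ∘ γ)' dt`. -/
theorem deriv_along_weakStar_convergence {X : Type*} [MetricSpace X]
    (γ : CurveFragment X)
    (f : X → ℝ) (hf : ∃ K : ℝ≥0, LipschitzWith K f)
    (fj : ℕ → X → ℝ) (K : ℝ≥0) (hfj : ∀ j, LipschitzWith K (fj j))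
    (hpt : ∀ x, Tendsto (fun j => fj j x) atTop (𝓝 (f x)))
    (d : ℕ → ℝ → ℝ)
    (hd : ∀ j, ∀ᵐ t ∂(volume.restrict γ.dom), γ.HasDerivAlong (fj j) t (d j t))
    (df : ℝ → ℝ)
    (hdf : ∀ᵐ t ∂(volume.restrict γ.dom), γ.HasDerivAlong f t (df t))
    (h : ℝ → ℝ) (hh : Integrable h (volume.restrict γ.dom)) :
    Tendsto (fun j => ∫ t in γ.dom, h t * d j t) atTop
      (𝓝 (∫ t in γ.dom, h t * df t)) :=
  deriv_along_weakStar_convergence_general γ f fj K hfj hpt d hd df hdf h hh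
end
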